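/- For all impartial games G, H₁, H₂, Ĥ, if 𝒢(H₁) = 𝒢(H₂), then 𝒢(G :_{Ĥ} H₁) = 𝒢(G :_{Ĥ} H₂). -/

import Mathlib

/-- mex (minimum excludant) of a set of naturals. -/
noncomputable def mexS (A : Set ℕ) : ℕ := sInf {n | n ∉ A}

/-- The colon operation on sets of naturals:
`A : B = A ∪ {x_i | i ∈ B}` where `x_0 < x_1 < ⋯` enumerates `ℕ \ A`. -/
noncomputable def colonS (A B : Set ℕ) : Set ℕ :=
  A ∪ (fun i => Nat.nth (fun n => n ∉ A) i) '' B

/-- Elementwise addition of a natural number: `A + b = {a + b | a ∈ A}`. -/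
def addS (A : Set ℕ) (b : ℕ) : Set ℕ := (· + b) '' A

/-- Elementwise bitwise XOR: `A ⊕ x = {a XOR x | a ∈ A}`. -/
def xorS (A : Set ℕ) (x : ℕ) : Set ℕ := (fun a => a ^^^ x) '' A

/-- `Gn n` is the set of (hereditarily finite) games born by day `n`:
`Gn 0 = {∅}`, `Gn (n+1) = 2^(Gn n)`. -/
noncomputable def Gn : ℕ → ZFSet
  | 0 => {∅}
  | n + 1 => ZFSet.powerset (Gn n)

/-- An impartial game: a hereditarily finite set. -/
def IsGame (G : ZFSet) : Prop := ∃ n, G ∈ Gn n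

/-- Birthday: least `n` with `G ∈ Gn n`. -/
noncomputable def birthday (G : ZFSet) : ℕ := sInf {n | G ∈ Gn n}

/-- `g` is the Grundy-number function: `g G = mex {g G' | G' ∈ G}`. -/
def IsGrundy (g : ZFSet → ℕ) : Prop :=
  ∀ G : ZFSet, g G = mexS {n | ∃ x ∈ G, g x = n}

/-- The variation set of `G` with respect to a Grundy function `g`:
the set of Grundy values of the options of `G`. -/
def vset (g : ZFSet → ℕ) (G : ZFSet) : Set ℕ := {n | ∃ x ∈ G, g x = n}

/-- `f` is the ordinal sum with substitution: `f G H Ĥ = G :_{Ĥ} H`,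
defined by `G :_{Ĥ} H = {G' :_{Ĥ} Ĥ | G' ∈ G} ∪ {G :_{Ĥ} H' | H' ∈ H}`. -/
def IsOSub (f : ZFSet → ZFSet → ZFSet → ZFSet) : Prop :=
  ∀ G H Hh x : ZFSet,
    x ∈ f G H Hh ↔ (∃ G' ∈ G, x = f G' Hh Hh) ∨ (∃ H' ∈ H, x = f G H' Hh)

/-- `s` is the ordinal sum: `G : H = {G' | G' ∈ G} ∪ {G : H' | H' ∈ H}`. -/
def IsOSum (s : ZFSet → ZFSet → ZFSet) : Prop :=
  ∀ G H x : ZFSet, x ∈ s G H ↔ x ∈ G ∨ (∃ H' ∈ H, x = s G H')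

/-- `d` is the disjunctive sum: `G + H = {G' + H | G' ∈ G} ∪ {G + H' | H' ∈ H}`. -/
def IsDSum (d : ZFSet → ZFSet → ZFSet) : Prop :=
  ∀ G H x : ZFSet, x ∈ d G H ↔ (∃ G' ∈ G, x = d G' H) ∨ (∃ H' ∈ H, x = d G H')

/-- The nimber `*n = {*m | m < n}`. -/
noncomputable def nim : ℕ → ZFSet
  | 0 => ∅
  | n + 1 => insert (nim n) (nim n)

/-- Left-associated chain of ordinal sums with substitution:
`chain f X Xh s k = X s :_{Xh (s+1)} X (s+1) :_{Xh (s+2)} ⋯ :_{Xh (s+k)} X (s+k)`. -/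
noncomputable def chain (f : ZFSet → ZFSet → ZFSet → ZFSet)
    (X Xh : ℕ → ZFSet) (s : ℕ) : ℕ → ZFSet
  | 0 => X s
  | k + 1 => f (chain f X Xh s k) (X (s + k + 1)) (Xh (s + k + 1))


lemma gn_toSet_finite : ∀ n, (Gn n).toSet.Finite := by
  intro n
  induction n with
  | zero =>
      show ({∅} : ZFSet).toSet.Finite
      rw [show ({∅} : ZFSet).toSet = {∅} from ZFSet.coe_singleton _]; exact Set.finite_singleton _
  | succ n ih =>
      have hsub : ZFSet.toSet '' (Gn (n+1)).toSet ⊆ {t | t ⊆ (Gn n).toSet} := by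
        rintro t ⟨x, hx, rfl⟩
        change x ∈ Gn (n+1) at hx
        have : x ⊆ Gn n := (ZFSet.mem_powerset).1 hx
        exact ZFSet.coe_subset_coe.2 this
      have : (ZFSet.toSet '' (Gn (n+1)).toSet).Finite :=
        (Set.Finite.finite_subsets ih).subset hsub
      exact Set.Finite.of_finite_image this ((show Function.Injective ZFSet.toSet from SetLike.coe_injective).injOn)

lemma game_toSet_finite {H : ZFSet} (hH : IsGame H) : H.toSet.Finite := by
  obtain ⟨n, hn⟩ := hH
  cases n with
  | zero =>
      have : H = ∅ := by simpa [Gn] using hn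
      simp [this, show (∅ : ZFSet).toSet = ∅ from ZFSet.coe_empty]
  | succ n =>
      have : H ⊆ Gn n := (ZFSet.mem_powerset).1 hn
      exact (gn_toSet_finite n).subset (ZFSet.coe_subset_coe.2 this)

lemma game_mem {H x : ZFSet} (hH : IsGame H) (hx : x ∈ H) : IsGame x := by
  obtain ⟨n, hn⟩ := hH
  cases n with
  | zero =>
      have : H = ∅ := by simpa [Gn] using hn
      subst this; exact absurd hx (ZFSet.notMem_empty x)
  | succ n => exact ⟨n, (ZFSet.mem_powerset).1 hn hx⟩

lemma mexS_eq {T : Set ℕ} {t : ℕ} (h1 : t ∉ T) (h2 : ∀ k < t, k ∈ T) : mexS T = t := by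
  unfold mexS
  refine le_antisymm (Nat.sInf_le h1) (le_csInf ⟨t, h1⟩ ?_)
  intro b hb
  by_contra hn
  push_neg at hn
  exact hb (h2 b hn)

lemma mex_colon {A S : Set ℕ} (hA : A.Finite) (hS : S.Finite) :
    mexS (A ∪ (Nat.nth (· ∉ A)) '' S) = Nat.nth (· ∉ A) (mexS S) := by
  classical
  have hp : (setOf (· ∉ A)).Infinite := hA.infinite_compl
  set p : ℕ → Prop := (· ∉ A) with hpdef
  set m := mexS S with hm
  have hmS : m ∉ S := by
    have hne : {n | n ∉ S}.Nonempty := hS.infinite_compl.nonempty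
    have := Nat.sInf_mem hne
    exact this
  have hlt : ∀ j < m, j ∈ S := by
    intro j hj
    by_contra hjS
    exact absurd (Nat.sInf_le hjS) (not_le.2 hj)
  apply mexS_eq
  · rintro (hmem | ⟨s, hsS, hs⟩)
    · exact (Nat.nth_mem_of_infinite hp m) hmem
    · exact hmS (Nat.nth_injective hp hs ▸ hsS)
  · intro k hk
    by_cases hkA : k ∈ A
    · exact Or.inl hkA
    · right
      have hkp : p k := hkA
      have hkn : Nat.nth p (Nat.count p k) = k := Nat.nth_count hkp
      have : Nat.count p k < m := by
        have := hk
        rw [← hkn] at this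
        exact (Nat.nth_lt_nth hp).1 this
      exact ⟨Nat.count p k, hlt _ this, hkn⟩

lemma key_colon (f : ZFSet → ZFSet → ZFSet → ZFSet) (hf : IsOSub f)
    (g : ZFSet → ℕ) (hg : IsGrundy g) (G Hh : ZFSet) (hG : IsGame G) :
    ∀ H, IsGame H →
      g (f G H Hh) =
        Nat.nth (· ∉ ((fun G' => g (f G' Hh Hh)) '' G.toSet)) (g H) := by
  set A : Set ℕ := (fun G' => g (f G' Hh Hh)) '' G.toSet with hA
  have hAfin : A.Finite := (game_toSet_finite hG).image _
  intro H
  induction H using ZFSet.inductionOn with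
  | _ H IH =>
    intro hH
    set S : Set ℕ := g '' H.toSet with hSdef
    have hSfin : S.Finite := (game_toSet_finite hH).image _
    have hset : {n | ∃ x ∈ f G H Hh, g x = n} = A ∪ (Nat.nth (· ∉ A)) '' S := by
      ext n
      constructor
      · rintro ⟨x, hx, rfl⟩
        rcases (hf G H Hh x).1 hx with ⟨G', hG', rfl⟩ | ⟨H', hH', rfl⟩
        · exact Or.inl ⟨G', SetLike.mem_coe.2 hG', rfl⟩
        · right
          refine ⟨g H', ⟨H', SetLike.mem_coe.2 hH', rfl⟩, ?_⟩
          exact (IH H' hH' (game_mem hH hH')).symm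
      · rintro (⟨G', hG', rfl⟩ | ⟨s, ⟨H', hH', rfl⟩, rfl⟩)
        · exact ⟨f G' Hh Hh, (hf G H Hh _).2 (Or.inl ⟨G', SetLike.mem_coe.1 hG', rfl⟩), rfl⟩
        · refine ⟨f G H' Hh, (hf G H Hh _).2 (Or.inr ⟨H', SetLike.mem_coe.1 hH', rfl⟩), ?_⟩
          exact IH H' (SetLike.mem_coe.1 hH') (game_mem hH (SetLike.mem_coe.1 hH'))
    have hgH : g H = mexS S := by
      have he : {n | ∃ x ∈ H, g x = n} = S := by
        ext n; simp [hSdef]; exact Iff.rfl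
      rw [hg H, he]
    calc g (f G H Hh) = mexS {n | ∃ x ∈ f G H Hh, g x = n} := hg _
      _ = mexS (A ∪ (Nat.nth (· ∉ A)) '' S) := by rw [hset]
      _ = Nat.nth (· ∉ A) (mexS S) := mex_colon hAfin hSfin
      _ = Nat.nth (· ∉ A) (g H) := by rw [hgH]

theorem stmt11 (f : ZFSet → ZFSet → ZFSet → ZFSet) (hf : IsOSub f)
    (g : ZFSet → ℕ) (hg : IsGrundy g)
    (G H1 H2 Hh : ZFSet) (hG : IsGame G) (hH1 : IsGame H1) (hH2 : IsGame H2)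
    (hHh : IsGame Hh) (h : g H1 = g H2) :
    g (f G H1 Hh) = g (f G H2 Hh) := by
  rw [key_colon f hf g hg G Hh hG H1 hH1, key_colon f hf g hg G Hh hG H2 hH2, h]
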